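/- arXiv:2312.16872 — 9 statements merged into one kernel-verified Lean document; each statement's English description precedes it below -/
import Mathlib

section
/- With c10a = Sa/z1 and φ0a = V·(log Sa − log R)/D, the zeroth-order solution satisfies the flux relation on the left subinterval [0,a]: ((L/z1 − c10a)/(α·H1)) · (1 + z1·(V − φ0a)/(log(L/z1) − log c10a)) = (L−R)·(z1·V + D)/(z1·H1·D), i.e. it equals J10 of Proposition 3.1. -/
/-!
Since `c10a = Sa / z1`, the factor `1 / z1` cancels in `log (L / z1) - log c10a`, leaving
`log L - log Sa`, and `L - Sa = α (L - R)`. The potential drop `V - φ0a` equals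
`V (log L - log Sa) / D`, so the logarithmic factor reduces to `(z1 V + D) / D` and the
concentration factor to `(L - R) / (z1 H1)`.
-/

open Real

theorem log_sub_log_ne_zero {x y : ℝ} (hx : 0 < x) (hy : 0 < y) (hxy : x ≠ y) :
    log x - log y ≠ 0 :=
  sub_ne_zero.mpr fun h => hxy (log_injOn_pos hx hy h)

theorem convex_comb_pos {L R α : ℝ} (hL : 0 < L) (hR : 0 < R) (hα₀ : 0 ≤ α) (hα₁ : α ≤ 1) :
    0 < (1 - α) * L + α * R := by
  have hmin : min L R ≤ (1 - α) * L + α * R := by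
    nlinarith [min_le_left L R, min_le_right L R]
  exact (lt_min hL hR).trans_le hmin

theorem sub_convex_comb_ne_zero {L R α : ℝ} (hα : α ≠ 0) (hLR : L ≠ R) :
    L - ((1 - α) * L + α * R) ≠ 0 := by
  have h : L - ((1 - α) * L + α * R) = α * (L - R) := by ring
  rw [h]
  exact mul_ne_zero hα (sub_ne_zero.mpr hLR)

theorem sub_mul_div_sub_eq {V a b c D : ℝ} (hD : D = c - b) (hD₀ : D ≠ 0) :
    V - V * (a - b) / D = V * (c - a) / D := by
  field_simp
  rw [hD]
  ring

theorem stmt0_general (z1 V L R H1 α β : ℝ)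
    (hz1 : 0 < z1) (hL : 0 < L) (hR : 0 < R) (hLR : L ≠ R)
    (hH1 : 0 < H1) (hα : 0 < α) (hαβ : α < β) (hβ : β < 1)
    (D Sa c10a φ0a J10 : ℝ)
    (hD : D = Real.log L - Real.log R)
    (hSa : Sa = (1 - α) * L + α * R)
    (hc : c10a = Sa / z1)
    (hφ : φ0a = V * (Real.log Sa - Real.log R) / D)
    (hJ : J10 = (L - R) * (z1 * V + D) / (z1 * H1 * D)) :
    (L / z1 - c10a) / (α * H1) *
      (1 + z1 * (V - φ0a) / (Real.log (L / z1) - Real.log c10a)) = J10 := by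
  have hSa_pos : 0 < Sa := hSa ▸ convex_comb_pos hL hR hα.le (hαβ.trans hβ).le
  have hLSa : L - Sa ≠ 0 := hSa ▸ sub_convex_comb_ne_zero hα.ne' hLR
  have hD₀ : D ≠ 0 := hD ▸ log_sub_log_ne_zero hL hR hLR
  have hlogLSa : log L - log Sa ≠ 0 := log_sub_log_ne_zero hL hSa_pos (sub_ne_zero.mp hLSa)
  have hlog : log (L / z1) - log c10a = log L - log Sa := by
    rw [hc, log_div hL.ne' hz1.ne', log_div hSa_pos.ne' hz1.ne']
    ring
  have hconc : (L / z1 - c10a) / (α * H1) = (L - R) / (z1 * H1) := by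
    rw [hc, hSa]
    field_simp
    ring
  have hpot : 1 + z1 * (V - φ0a) / (log L - log Sa) = (z1 * V + D) / D := by
    rw [hφ, sub_mul_div_sub_eq hD hD₀]
    field_simp
    ring
  rw [hlog, hconc, hpot, hJ]
  field_simp

theorem stmt0 (z1 z2 V L R H1 α β : ℝ)
    (hz1 : 0 < z1) (hz2 : z2 < 0) (hL : 0 < L) (hR : 0 < R) (hLR : L ≠ R)
    (hH1 : 0 < H1) (hα : 0 < α) (hαβ : α < β) (hβ : β < 1)
    (D Sa c10a φ0a J10 : ℝ)
    (hD : D = Real.log L - Real.log R)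
    (hSa : Sa = (1 - α) * L + α * R)
    (hc : c10a = Sa / z1)
    (hφ : φ0a = V * (Real.log Sa - Real.log R) / D)
    (hJ : J10 = (L - R) * (z1 * V + D) / (z1 * H1 * D)) :
    (L / z1 - c10a) / (α * H1) *
      (1 + z1 * (V - φ0a) / (Real.log (L / z1) - Real.log c10a)) = J10 :=
  stmt0_general z1 V L R H1 α β hz1 hL hR hLR hH1 hα hαβ hβ D Sa c10a φ0a J10 hD hSa hc hφ hJ
end

section
/- With c10b = Sb/z1 and φ0b = V·(log Sb − log R)/D, the zeroth-order solution satisfies the flux relation on the right subinterval [b,1]: ((c10b − R/z1)/((1−β)·H1)) · (1 + z1·(φ0b − 0)/(log c10b − log(R/z1))) = (L−R)·(z1·V + D)/(z1·H1·D), i.e. it equals J10 of Proposition 3.1. -/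
theorem stmt1 (z1 z2 V L R H1 α β : ℝ)
    (hz1 : 0 < z1) (hz2 : z2 < 0) (hL : 0 < L) (hR : 0 < R) (hLR : L ≠ R)
    (hH1 : 0 < H1) (hα : 0 < α) (hαβ : α < β) (hβ : β < 1)
    (D Sb c10b φ0b J10 : ℝ)
    (hD : D = Real.log L - Real.log R)
    (hSb : Sb = (1 - β) * L + β * R)
    (hc : c10b = Sb / z1)
    (hφ : φ0b = V * (Real.log Sb - Real.log R) / D)
    (hJ : J10 = (L - R) * (z1 * V + D) / (z1 * H1 * D)) :
    (c10b - R / z1) / ((1 - β) * H1) *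
      (1 + z1 * (φ0b - 0) / (Real.log c10b - Real.log (R / z1))) = J10 := by
  have hβ1 : 0 < 1 - β := by linarith
  have hSbpos : 0 < Sb := by
    rw [hSb]; have : 0 < α := hα
    nlinarith [mul_pos hβ1 hL, mul_pos (lt_trans hα hαβ) hR]
  have hDne : D ≠ 0 := by
    rw [hD]
    intro h
    exact hLR (Real.log_injOn_pos (Set.mem_Ioi.mpr hL) (Set.mem_Ioi.mpr hR)
      (by linarith))
  have hlogdiff : Real.log c10b - Real.log (R / z1) = Real.log Sb - Real.log R := by
    rw [hc, Real.log_div (ne_of_gt hSbpos) (ne_of_gt hz1),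
      Real.log_div (ne_of_gt hR) (ne_of_gt hz1)]
    ring
  have hEne : Real.log Sb - Real.log R ≠ 0 := by
    intro h
    have hSbR : Sb = R := Real.log_injOn_pos (Set.mem_Ioi.mpr hSbpos)
      (Set.mem_Ioi.mpr hR) (by linarith)
    have : (1 - β) * (L - R) = 0 := by rw [hSb] at hSbR; linarith
    rcases mul_eq_zero.mp this with h1 | h2
    · linarith
    · exact hLR (by linarith)
  rw [hlogdiff, hc, hφ, hJ]
  set E := Real.log Sb - Real.log R with hE
  clear_value E
  rw [hSb]
  field_simp
  ring
end

section
/- With c2L = −L/z2, c20a = −Sa/z2 and φ0a = V·(log Sa − log R)/D, the zeroth-order solution satisfies the flux relation for the second (negative) species on the left subinterval [0,a]: ((c2L − c20a)/(α·H1)) · (1 + z2·(V − φ0a)/(log c2L − log c20a)) = −(L−R)·(z2·V + D)/(z2·H1·D), i.e. it equals J20 of Proposition 3.1. -/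
theorem stmt2 (z1 z2 V L R H1 α β : ℝ)
    (hz1 : 0 < z1) (hz2 : z2 < 0) (hL : 0 < L) (hR : 0 < R) (hLR : L ≠ R)
    (hH1 : 0 < H1) (hα : 0 < α) (hαβ : α < β) (hβ : β < 1)
    (D Sa c2L c20a φ0a J20 : ℝ)
    (hD : D = Real.log L - Real.log R)
    (hSa : Sa = (1 - α) * L + α * R)
    (hc2L : c2L = -L / z2)
    (hc : c20a = -Sa / z2)
    (hφ : φ0a = V * (Real.log Sa - Real.log R) / D)
    (hJ : J20 = -((L - R) * (z2 * V + D)) / (z2 * H1 * D)) :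
    (c2L - c20a) / (α * H1) *
      (1 + z2 * (V - φ0a) / (Real.log c2L - Real.log c20a)) = J20 := by
  have hz2' : (0:ℝ) < -z2 := by linarith
  have hα1 : α < 1 := lt_trans hαβ hβ
  have hSapos : 0 < Sa := by rw [hSa]; nlinarith
  have hSaL : Sa ≠ L := by
    rw [hSa]; intro h
    apply hLR
    have : α * (R - L) = 0 := by linarith
    have := mul_eq_zero.mp this
    rcases this with h1 | h2
    · exact absurd h1 (ne_of_gt hα)
    · linarith
  have hD0 : D ≠ 0 := by
    rw [hD]
    intro h
    exact hLR (Real.log_injOn_pos (Set.mem_Ioi.mpr hL) (Set.mem_Ioi.mpr hR) (by linarith))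
  have hA0 : Real.log L - Real.log Sa ≠ 0 := by
    intro h
    exact hSaL (Real.log_injOn_pos (Set.mem_Ioi.mpr hL) (Set.mem_Ioi.mpr hSapos) (by linarith)).symm
  have hlog : Real.log c2L - Real.log c20a = Real.log L - Real.log Sa := by
    rw [hc2L, hc, show -L/z2 = L/(-z2) by ring, show -Sa/z2 = Sa/(-z2) by ring,
      Real.log_div hL.ne' hz2'.ne', Real.log_div hSapos.ne' hz2'.ne']
    ring
  have hLR' : Real.log Sa - Real.log R = D - (Real.log L - Real.log Sa) := by
    rw [hD]; ring
  rw [hlog, hc2L, hc, hφ, hJ, hLR',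
    show -L/z2 - -Sa/z2 = α*(R-L)/z2 from by rw [hSa]; ring]
  have hz2ne : z2 ≠ 0 := ne_of_lt hz2
  field_simp
  ring
end

section
/- The zeroth-order solution satisfies the concentration matching condition of the governing system: c10b = exp(z1·z2·(J10 + J20)·y0) · c10a, where c10a = Sa/z1, c10b = Sb/z1, J10 = (L−R)·(z1·V + D)/(z1·H1·D), J20 = −(L−R)·(z2·V + D)/(z2·H1·D), and y0 = H1·log(Sa/Sb)/((z1−z2)·(L−R)). -/
theorem stmt4 (z1 z2 V L R H1 α β : ℝ)
    (hz1 : 0 < z1) (hz2 : z2 < 0) (hL : 0 < L) (hR : 0 < R) (hLR : L ≠ R)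
    (hH1 : 0 < H1) (hα : 0 < α) (hαβ : α < β) (hβ : β < 1)
    (D Sa Sb c10a c10b J10 J20 y0 : ℝ)
    (hD : D = Real.log L - Real.log R)
    (hSa : Sa = (1 - α) * L + α * R)
    (hSb : Sb = (1 - β) * L + β * R)
    (hca : c10a = Sa / z1)
    (hcb : c10b = Sb / z1)
    (hJ1 : J10 = (L - R) * (z1 * V + D) / (z1 * H1 * D))
    (hJ2 : J20 = -((L - R) * (z2 * V + D)) / (z2 * H1 * D))
    (hy0 : y0 = H1 * Real.log (Sa / Sb) / ((z1 - z2) * (L - R))) :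
    c10b = Real.exp (z1 * z2 * (J10 + J20) * y0) * c10a := by
  have hz1' : z1 ≠ 0 := ne_of_gt hz1
  have hz2' : z2 ≠ 0 := ne_of_lt hz2
  have hz12 : z1 - z2 ≠ 0 := by linarith
  have hLR' : L - R ≠ 0 := sub_ne_zero.mpr hLR
  have hD' : D ≠ 0 := by
    rcases lt_or_gt_of_ne hLR with h | h
    · have := Real.log_lt_log hL h
      rw [hD]; intro hc; linarith
    · have := Real.log_lt_log hR h
      rw [hD]; intro hc; linarith
  have hSa' : 0 < Sa := by rw [hSa]; nlinarith
  have hSb' : 0 < Sb := by rw [hSb]; nlinarith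
  have key : z1 * z2 * (J10 + J20) * y0 = Real.log (Sb / Sa) := by
    rw [hJ1, hJ2, hy0, Real.log_div (ne_of_gt hSa') (ne_of_gt hSb'),
      Real.log_div (ne_of_gt hSb') (ne_of_gt hSa')]
    field_simp
    ring
  rw [key, Real.exp_log (div_pos hSb' hSa'), hca, hcb]
  field_simp
end

section
/- Theorem 4.1(i1): Suppose B ≠ 1 and the critical voltages satisfy V_q^1 < 0 < V_q^2, where V_q^1 = −D/(z2·(1−B)) and V_q^2 = −D/(z1·(1−B)). If V_q^1 < V < V_q^2, and moreover z1·V + D ≠ 0 and z2·V + D ≠ 0, then J10·J11 < 0 and J20·J21 > 0; that is, a small positive permanent charge Q0 decreases |J1| and strengthens |J2|. -/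
theorem stmt12 (z1 z2 V L R H1 α β : ℝ)
    (hz1 : 0 < z1) (hz2 : z2 < 0) (hL : 0 < L) (hR : 0 < R) (hLR : L ≠ R)
    (hH1 : 0 < H1) (hα : 0 < α) (hαβ : α < β) (hβ : β < 1)
    (D Sa Sb A B J10 J20 J11 J21 Vq1 Vq2 : ℝ)
    (hD : D = Real.log L - Real.log R)
    (hSa : Sa = (1 - α) * L + α * R)
    (hSb : Sb = (1 - β) * L + β * R)
    (hJ10 : J10 = (L - R) * (z1 * V + D) / (z1 * H1 * D))
    (hJ20 : J20 = -((L - R) * (z2 * V + D)) / (z2 * H1 * D))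
    (hA : A = -((β - α) * (L - R) ^ 2) / (Sa * Sb * D))
    (hB : B = Real.log (Sb / Sa) / A)
    (hJ11 : J11 = A * (z2 * (1 - B) * V + D) * (z1 * V + D) / ((z1 - z2) * H1 * D ^ 2))
    (hJ21 : J21 = A * (z1 * (1 - B) * V + D) * (z2 * V + D) / ((z2 - z1) * H1 * D ^ 2))
    (hB1 : B ≠ 1)
    (hV1 : Vq1 = -D / (z2 * (1 - B)))
    (hV2 : Vq2 = -D / (z1 * (1 - B)))
    (horder : Vq1 < 0 ∧ 0 < Vq2)
    (hrange : Vq1 < V ∧ V < Vq2)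
    (hne1 : z1 * V + D ≠ 0) (hne2 : z2 * V + D ≠ 0) :
    J10 * J11 < 0 ∧ 0 < J20 * J21 := by
  obtain ⟨ho1, ho2⟩ := horder
  obtain ⟨hr1, hr2⟩ := hrange
  rw [hV1] at hr1 ho1
  rw [hV2] at hr2 ho2
  have hα1 : α < 1 := hαβ.trans hβ
  have hSa' : 0 < Sa := by rw [hSa]; nlinarith
  have hSb' : 0 < Sb := by rw [hSb]; nlinarith
  have hLRne : L - R ≠ 0 := sub_ne_zero.mpr hLR
  have hK : 0 < (β - α) * (L - R) ^ 2 :=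
    mul_pos (by linarith) (pow_two_pos_of_ne_zero hLRne)
  have hsq1 : 0 < (z1 * V + D) ^ 2 := pow_two_pos_of_ne_zero hne1
  have hsq2 : 0 < (z2 * V + D) ^ 2 := pow_two_pos_of_ne_zero hne2
  have hz1' : z1 ≠ 0 := ne_of_gt hz1
  have hz2' : z2 ≠ 0 := ne_of_lt hz2
  have hH1' : H1 ≠ 0 := ne_of_gt hH1
  have hz12 : z1 - z2 ≠ 0 := by intro h; linarith
  have hDne : D ≠ 0 := by
    rw [hD]
    rcases lt_or_gt_of_ne hLR with h | h
    · exact ne_of_lt (by linarith [Real.log_lt_log hL h])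
    · exact ne_of_gt (by linarith [Real.log_lt_log hR h])
  have e1 : J10 * J11 =
      ((L - R) * (z1 * V + D) ^ 2 * (A * (z2 * (1 - B) * V + D))) /
        ((z1 * H1 * D) * ((z1 - z2) * H1 * D ^ 2)) := by
    rw [hJ10, hJ11, div_mul_div_comm]; congr 1; ring
  have e2 : J20 * J21 =
      (-((L - R) * (z2 * V + D) ^ 2) * (A * (z1 * (1 - B) * V + D))) /
        ((z2 * H1 * D) * ((z2 - z1) * H1 * D ^ 2)) := by
    rw [hJ20, hJ21, div_mul_div_comm]; congr 1; ring
  rcases lt_or_gt_of_ne hLR with hlt | hgt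
  · -- L < R, hence D < 0
    have hDneg : D < 0 := by
      have := Real.log_lt_log hL hlt; rw [hD]; linarith
    have hD2 : 0 < D ^ 2 := pow_two_pos_of_ne_zero hDne
    have hApos : 0 < A := by
      rw [hA]
      exact div_pos_of_neg_of_neg (by linarith)
        (mul_neg_of_pos_of_neg (mul_pos hSa' hSb') hDneg)
    have htpos : 0 < 1 - B := by
      rcases div_pos_iff.mp ho2 with ⟨h1, h2⟩ | ⟨h1, h2⟩
      · rcases mul_pos_iff.mp h2 with ⟨_, h⟩ | ⟨h, _⟩
        · exact h
        · linarith
      · linarith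
    have hcneg : z2 * (1 - B) < 0 := mul_neg_of_neg_of_pos hz2 htpos
    have hcpos' : 0 < z1 * (1 - B) := mul_pos hz1 htpos
    have hc1 : z2 * (1 - B) * V + D < 0 := by
      have := (div_lt_iff_of_neg hcneg).mp hr1
      linarith
    have hc2 : z1 * (1 - B) * V + D < 0 := by
      have := (lt_div_iff₀ hcpos').mp hr2
      linarith
    constructor
    · rw [e1]
      apply div_neg_of_pos_of_neg
      · exact mul_pos_of_neg_of_neg (mul_neg_of_neg_of_pos (by linarith) hsq1)
          (mul_neg_of_pos_of_neg hApos hc1)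
      · exact mul_neg_of_neg_of_pos
          (mul_neg_of_pos_of_neg (mul_pos hz1 hH1) hDneg)
          (mul_pos (mul_pos (by linarith) hH1) hD2)
    · rw [e2]
      apply div_pos_of_neg_of_neg
      · exact mul_neg_of_pos_of_neg
          (by linarith [mul_neg_of_neg_of_pos (by linarith : L - R < 0) hsq2])
          (mul_neg_of_pos_of_neg hApos hc2)
      · exact mul_neg_of_pos_of_neg
          (mul_pos_of_neg_of_neg (mul_neg_of_neg_of_pos hz2 hH1) hDneg)
          (mul_neg_of_neg_of_pos (mul_neg_of_neg_of_pos (by linarith) hH1) hD2)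
  · -- L > R, hence D > 0
    have hDpos : 0 < D := by
      have := Real.log_lt_log hR hgt; rw [hD]; linarith
    have hD2 : 0 < D ^ 2 := pow_pos hDpos 2
    have hAneg : A < 0 := by
      rw [hA]
      exact div_neg_of_neg_of_pos (by linarith)
        (mul_pos (mul_pos hSa' hSb') hDpos)
    have htneg : 1 - B < 0 := by
      rcases div_pos_iff.mp ho2 with ⟨h1, h2⟩ | ⟨h1, h2⟩
      · linarith
      · rcases mul_neg_iff.mp h2 with ⟨_, h⟩ | ⟨h, _⟩
        · exact h
        · linarith
    have hcpos : 0 < z2 * (1 - B) := mul_pos_of_neg_of_neg hz2 htneg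
    have hcneg' : z1 * (1 - B) < 0 := mul_neg_of_pos_of_neg hz1 htneg
    have hc1 : 0 < z2 * (1 - B) * V + D := by
      have := (div_lt_iff₀ hcpos).mp hr1
      linarith
    have hc2 : 0 < z1 * (1 - B) * V + D := by
      have := (lt_div_iff_of_neg hcneg').mp hr2
      linarith
    constructor
    · rw [e1]
      apply div_neg_of_neg_of_pos
      · exact mul_neg_of_pos_of_neg (mul_pos (by linarith) hsq1)
          (mul_neg_of_neg_of_pos hAneg hc1)
      · exact mul_pos (mul_pos (mul_pos hz1 hH1) hDpos)
          (mul_pos (mul_pos (by linarith) hH1) hD2)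
    · rw [e2]
      apply div_pos
      · exact mul_pos_of_neg_of_neg
          (by linarith [mul_pos (by linarith : (0:ℝ) < L - R) hsq2])
          (mul_neg_of_neg_of_pos hAneg hc2)
      · exact mul_pos_of_neg_of_neg
          (mul_neg_of_neg_of_pos (mul_neg_of_neg_of_pos hz2 hH1) hDpos)
          (mul_neg_of_neg_of_pos (mul_neg_of_neg_of_pos (by linarith : z2 - z1 < 0) hH1) hD2)
end

section
/- Theorem 4.1(i2): Suppose B ≠ 1 and the critical voltages satisfy V_q^1 < 0 < V_q^2, where V_q^1 = −D/(z2·(1−B)) and V_q^2 = −D/(z1·(1−B)). If V < V_q^1, and moreover z1·V + D ≠ 0 and z2·V + D ≠ 0, then J10·J11 > 0 and J20·J21 > 0; that is, a small positive permanent charge Q0 strengthens both |J1| and |J2|. -/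
set_option maxHeartbeats 2000000


theorem stmt13 (z1 z2 V L R H1 α β : ℝ)
    (hz1 : 0 < z1) (hz2 : z2 < 0) (hL : 0 < L) (hR : 0 < R) (hLR : L ≠ R)
    (hH1 : 0 < H1) (hα : 0 < α) (hαβ : α < β) (hβ : β < 1)
    (D Sa Sb A B J10 J20 J11 J21 Vq1 Vq2 : ℝ)
    (hD : D = Real.log L - Real.log R)
    (hSa : Sa = (1 - α) * L + α * R)
    (hSb : Sb = (1 - β) * L + β * R)
    (hJ10 : J10 = (L - R) * (z1 * V + D) / (z1 * H1 * D))
    (hJ20 : J20 = -((L - R) * (z2 * V + D)) / (z2 * H1 * D))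
    (hA : A = -((β - α) * (L - R) ^ 2) / (Sa * Sb * D))
    (hB : B = Real.log (Sb / Sa) / A)
    (hJ11 : J11 = A * (z2 * (1 - B) * V + D) * (z1 * V + D) / ((z1 - z2) * H1 * D ^ 2))
    (hJ21 : J21 = A * (z1 * (1 - B) * V + D) * (z2 * V + D) / ((z2 - z1) * H1 * D ^ 2))
    (hB1 : B ≠ 1)
    (hV1 : Vq1 = -D / (z2 * (1 - B)))
    (hV2 : Vq2 = -D / (z1 * (1 - B)))
    (horder : Vq1 < 0 ∧ 0 < Vq2)
    (hrange : V < Vq1)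
    (hne1 : z1 * V + D ≠ 0) (hne2 : z2 * V + D ≠ 0) :
    0 < J10 * J11 ∧ 0 < J20 * J21 := by

  obtain ⟨hVq1, hVq2⟩ := horder
  have hLRD : 0 < (L - R) * D := by
    rcases hLR.lt_or_gt with h | h
    · have : Real.log L < Real.log R := Real.log_lt_log hL h
      nlinarith
    · have : Real.log R < Real.log L := Real.log_lt_log hR h
      nlinarith
  have hD0 : D ≠ 0 := by
    intro h; rw [h] at hLRD; simp at hLRD
  have hD2 : 0 < D ^ 2 := (sq_nonneg _).lt_of_ne (Ne.symm (pow_ne_zero 2 hD0))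
  have hSa0 : 0 < Sa := by rw [hSa]; nlinarith
  have hSb0 : 0 < Sb := by rw [hSb]; nlinarith
  have hAD : A * D < 0 := by
    have hAD' : A * D = -((β - α) * (L - R) ^ 2) / (Sa * Sb) := by
      rw [hA]; field_simp
    rw [hAD']
    apply div_neg_of_neg_of_pos
    · have hLR0 : L - R ≠ 0 := sub_ne_zero.mpr hLR
      have : 0 < (L - R) ^ 2 := by rcases hLR0.lt_or_gt with h | h <;> nlinarith
      nlinarith
    · exact mul_pos hSa0 hSb0
  -- D * (1 - B) < 0
  have hDe : D * (1 - B) < 0 := by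
    rw [hV2] at hVq2
    rcases div_pos_iff.mp hVq2 with ⟨h1, h2⟩ | ⟨h1, h2⟩
    · rcases mul_pos_iff.mp h2 with ⟨_, h4⟩ | ⟨h3, _⟩
      · exact mul_neg_of_neg_of_pos (by linarith) h4
      · linarith
    · rcases mul_neg_iff.mp h2 with ⟨_, h4⟩ | ⟨h3, _⟩
      · exact mul_neg_of_pos_of_neg (by linarith) h4
      · linarith
  have hV0 : V < 0 := lt_trans hrange hVq1
  have hcD : 0 < z2 * (1 - B) * D := by
    linarith [mul_pos_of_neg_of_neg hz2 hDe]
  have hc0 : z2 * (1 - B) ≠ 0 := by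
    intro h; rw [h] at hcD; simp at hcD
  have hQ1 : (z2 * (1 - B) * V + D) * D < 0 := by
    rw [hV1] at hrange
    rcases hc0.lt_or_gt with hc | hc
    · have hDneg : D < 0 := by
        rcases mul_pos_iff.mp hcD with ⟨h1, _⟩ | ⟨_, h2⟩
        · linarith
        · linarith
      have h5 := (lt_div_iff_of_neg hc).mp hrange
      have hpos : 0 < z2 * (1 - B) * V + D := by nlinarith
      exact mul_neg_of_pos_of_neg hpos hDneg
    · have hDpos : 0 < D := by
        rcases mul_pos_iff.mp hcD with ⟨_, h2⟩ | ⟨h1, _⟩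
        · linarith
        · linarith
      have h5 := (lt_div_iff₀ hc).mp hrange
      have hneg : z2 * (1 - B) * V + D < 0 := by nlinarith
      exact mul_neg_of_neg_of_pos hneg hDpos
  have hQ2 : 0 < (z1 * (1 - B) * V + D) * D := by
    have hc2D : z1 * (1 - B) * D < 0 := by
      linarith [mul_neg_of_pos_of_neg hz1 hDe]
    have h1 : 0 < z1 * (1 - B) * D * V := mul_pos_of_neg_of_neg hc2D hV0
    have h2 : (z1 * (1 - B) * V + D) * D = z1 * (1 - B) * D * V + D ^ 2 := by ring
    rw [h2]; linarith
  have hP2 : 0 < A * (z2 * (1 - B) * V + D) := by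
    have h := mul_pos_of_neg_of_neg hAD hQ1
    by_contra hcon
    push_neg at hcon
    have h2 : A * (z2 * (1 - B) * V + D) * D ^ 2 ≤ 0 :=
      mul_nonpos_iff.mpr (Or.inr ⟨hcon, sq_nonneg D⟩)
    nlinarith
  have hP3 : A * (z1 * (1 - B) * V + D) < 0 := by
    have h := mul_neg_of_neg_of_pos hAD hQ2
    by_contra hcon
    push_neg at hcon
    have h2 : 0 ≤ A * (z1 * (1 - B) * V + D) * D ^ 2 :=
      mul_nonneg hcon (sq_nonneg D)
    nlinarith
  have hsq1 : 0 < (z1 * V + D) ^ 2 :=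
    (sq_nonneg _).lt_of_ne (Ne.symm (pow_ne_zero 2 hne1))
  have hsq2 : 0 < (z2 * V + D) ^ 2 :=
    (sq_nonneg _).lt_of_ne (Ne.symm (pow_ne_zero 2 hne2))
  have hz1z2 : 0 < z1 - z2 := by linarith
  have hH12 : 0 < H1 ^ 2 := pow_pos hH1 2
  have hD4 : 0 < D ^ 4 := by have := mul_pos hD2 hD2; nlinarith [this]
  constructor
  · have e1 : J10 * J11 =
        ((L - R) * D) * (A * (z2 * (1 - B) * V + D)) * (z1 * V + D) ^ 2 /
          (z1 * (z1 - z2) * H1 ^ 2 * D ^ 4) := by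
      rw [hJ10, hJ11]
      field_simp
    rw [e1]
    apply div_pos
    · exact mul_pos (mul_pos hLRD hP2) hsq1
    · exact mul_pos (mul_pos (mul_pos hz1 hz1z2) hH12) hD4
  · have e2 : J20 * J21 =
        ((L - R) * D) * (-(A * (z1 * (1 - B) * V + D))) * (z2 * V + D) ^ 2 /
          (z2 * (z2 - z1) * H1 ^ 2 * D ^ 4) := by
      have hzz0 : z2 - z1 ≠ 0 := by intro h; apply hz2.ne; linarith
      rw [hJ20, hJ21]
      field_simp [hz1.ne', hz2.ne, hH1.ne', hD0, hzz0]
    rw [e2]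
    apply div_pos
    · exact mul_pos (mul_pos hLRD (by linarith)) hsq2
    · have hzz : 0 < z2 * (z2 - z1) := mul_pos_of_neg_of_neg hz2 (by linarith)
      exact mul_pos (mul_pos hzz hH12) hD4
end

section
/- Theorem 4.1(ii1): Suppose B ≠ 1 and the critical voltages satisfy V_q^1 > 0 > V_q^2, where V_q^1 = −D/(z2·(1−B)) and V_q^2 = −D/(z1·(1−B)). If V_q^2 < V < V_q^1, and moreover z1·V + D ≠ 0 and z2·V + D ≠ 0, then J10·J11 < 0 and J20·J21 > 0. -/
/-! Both products factor into terms of definite sign: `(L - R) * D > 0` because `log` is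
increasing, `A * D < 0`, and strictly between the critical voltages the first-order factors
`z_j * (1 - B) * V + D` have the sign of `D`, so the sign of each product is that of `A * D`
times the sign of `z_i * (z_i - z_j)`. -/

open Real

lemma sub_mul_log_sub_log_pos {x y : ℝ} (hx : 0 < x) (hy : 0 < y) (hxy : x ≠ y) :
    0 < (x - y) * (log x - log y) := by
  rcases hxy.lt_or_gt with h | h
  · exact mul_pos_of_neg_of_neg (sub_neg.mpr h) (sub_neg.mpr (log_lt_log hx h))
  · exact mul_pos (sub_pos.mpr h) (sub_pos.mpr (log_lt_log hy h))

lemma convex_combination_pos {x y t : ℝ} (hx : 0 < x) (hy : 0 < y) (ht₀ : 0 ≤ t) (ht₁ : t ≤ 1) :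
    0 < (1 - t) * x + t * y := by
  rcases ht₀.eq_or_lt with rfl | ht₀
  · simpa using hx
  · exact add_pos_of_nonneg_of_pos (mul_nonneg (sub_nonneg.mpr ht₁) hx.le) (mul_pos ht₀ hy)

/-- `q = -D / c` is the critical voltage at which `c * V + D` vanishes; the hypothesis on `V` says
that `V` lies on the same side of `q` as `0`. -/
lemma mul_pos_of_critical_voltage {c D V q : ℝ} (hq : q = -D / c) (hV : 0 < q * (q - V)) :
    0 < (c * V + D) * D := by
  have hc : c ≠ 0 := by
    rintro rfl
    simp [hq] at hV
  have hD : D = -(c * q) := by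
    rw [hq]; field_simp
  have key : (c * V + D) * D = c ^ 2 * (q * (q - V)) := by
    rw [hD]; ring
  rw [key]
  positivity

lemma flux_mul_first_order_neg {a A c D H z z' V : ℝ} (haD : 0 < a * D) (hAD : A * D < 0)
    (hcD : 0 < (c * V + D) * D) (hzV : z * V + D ≠ 0) (hz : 0 < z * (z - z')) (hH : H ≠ 0) :
    a * (z * V + D) / (z * H * D) * (A * (c * V + D) * (z * V + D) / ((z - z') * H * D ^ 2)) < 0 := by
  have hD : D ≠ 0 := by
    rintro rfl
    simp at haD
  have hz0 : z ≠ 0 := by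
    rintro rfl
    simp at hz
  have hzz' : z - z' ≠ 0 := by
    rintro h
    simp [h] at hz
  have key : a * (z * V + D) / (z * H * D) * (A * (c * V + D) * (z * V + D) / ((z - z') * H * D ^ 2))
      = (a * D) * (A * D) * ((c * V + D) * D) * (z * V + D) ^ 2 / (z * (z - z') * H ^ 2 * D ^ 6) := by
    field_simp
  rw [key]
  apply div_neg_of_neg_of_pos
  · have hpos : 0 < (a * D) * ((c * V + D) * D) * (z * V + D) ^ 2 :=
      mul_pos (mul_pos haD hcD) (by positivity)
    linarith [mul_neg_of_neg_of_pos hAD hpos]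
  · positivity

theorem stmt15_general (z1 z2 V L R H1 α β : ℝ)
    (hz1 : 0 < z1) (hz2 : z2 < 0) (hL : 0 < L) (hR : 0 < R) (hLR : L ≠ R)
    (hH1 : 0 < H1) (hα : 0 < α) (hαβ : α < β) (hβ : β < 1)
    (D Sa Sb A B J10 J20 J11 J21 Vq1 Vq2 : ℝ)
    (hD : D = Real.log L - Real.log R)
    (hSa : Sa = (1 - α) * L + α * R)
    (hSb : Sb = (1 - β) * L + β * R)
    (hJ10 : J10 = (L - R) * (z1 * V + D) / (z1 * H1 * D))
    (hJ20 : J20 = -((L - R) * (z2 * V + D)) / (z2 * H1 * D))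
    (hA : A = -((β - α) * (L - R) ^ 2) / (Sa * Sb * D))
    (hJ11 : J11 = A * (z2 * (1 - B) * V + D) * (z1 * V + D) / ((z1 - z2) * H1 * D ^ 2))
    (hJ21 : J21 = A * (z1 * (1 - B) * V + D) * (z2 * V + D) / ((z2 - z1) * H1 * D ^ 2))
    (hV1 : Vq1 = -D / (z2 * (1 - B)))
    (hV2 : Vq2 = -D / (z1 * (1 - B)))
    (horder : Vq2 < 0 ∧ 0 < Vq1)
    (hrange : Vq2 < V ∧ V < Vq1)
    (hne1 : z1 * V + D ≠ 0) (hne2 : z2 * V + D ≠ 0) :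
    J10 * J11 < 0 ∧ 0 < J20 * J21 := by
  have hLRD : 0 < (L - R) * D := hD ▸ sub_mul_log_sub_log_pos hL hR hLR
  have hSaSb : 0 < Sa * Sb := by
    rw [hSa, hSb]
    exact mul_pos (convex_combination_pos hL hR hα.le (hαβ.trans hβ).le)
      (convex_combination_pos hL hR (hα.trans hαβ).le hβ.le)
  have hD0 : D ≠ 0 := by
    rintro rfl
    simp at hLRD
  have hAD : A * D < 0 := by
    rw [hA, div_mul_eq_mul_div, mul_div_mul_right _ _ hD0]
    exact div_neg_of_neg_of_pos
      (neg_neg_of_pos (mul_pos (sub_pos.mpr hαβ) (sq_pos_of_ne_zero (sub_ne_zero.mpr hLR)))) hSaSb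
  have h1 := mul_pos_of_critical_voltage hV1 (mul_pos horder.2 (sub_pos.mpr hrange.2))
  have h2 := mul_pos_of_critical_voltage hV2 (mul_pos_of_neg_of_neg horder.1 (sub_neg.mpr hrange.1))
  constructor
  · rw [hJ10, hJ11]
    exact flux_mul_first_order_neg hLRD hAD h1 hne1 (mul_pos hz1 (by linarith)) hH1.ne'
  · rw [hJ20, hJ21, neg_div, neg_mul, neg_pos]
    exact flux_mul_first_order_neg hLRD hAD h2 hne2 (mul_pos_of_neg_of_neg hz2 (by linarith)) hH1.ne'

theorem stmt15 (z1 z2 V L R H1 α β : ℝ)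
    (hz1 : 0 < z1) (hz2 : z2 < 0) (hL : 0 < L) (hR : 0 < R) (hLR : L ≠ R)
    (hH1 : 0 < H1) (hα : 0 < α) (hαβ : α < β) (hβ : β < 1)
    (D Sa Sb A B J10 J20 J11 J21 Vq1 Vq2 : ℝ)
    (hD : D = Real.log L - Real.log R)
    (hSa : Sa = (1 - α) * L + α * R)
    (hSb : Sb = (1 - β) * L + β * R)
    (hJ10 : J10 = (L - R) * (z1 * V + D) / (z1 * H1 * D))
    (hJ20 : J20 = -((L - R) * (z2 * V + D)) / (z2 * H1 * D))
    (hA : A = -((β - α) * (L - R) ^ 2) / (Sa * Sb * D))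
    (hB : B = Real.log (Sb / Sa) / A)
    (hJ11 : J11 = A * (z2 * (1 - B) * V + D) * (z1 * V + D) / ((z1 - z2) * H1 * D ^ 2))
    (hJ21 : J21 = A * (z1 * (1 - B) * V + D) * (z2 * V + D) / ((z2 - z1) * H1 * D ^ 2))
    (hB1 : B ≠ 1)
    (hV1 : Vq1 = -D / (z2 * (1 - B)))
    (hV2 : Vq2 = -D / (z1 * (1 - B)))
    (horder : Vq2 < 0 ∧ 0 < Vq1)
    (hrange : Vq2 < V ∧ V < Vq1)
    (hne1 : z1 * V + D ≠ 0) (hne2 : z2 * V + D ≠ 0) :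
    J10 * J11 < 0 ∧ 0 < J20 * J21 :=
  stmt15_general z1 z2 V L R H1 α β hz1 hz2 hL hR hLR hH1 hα hαβ hβ D Sa Sb A B J10 J20 J11 J21 Vq1
    Vq2 hD hSa hSb hJ10 hJ20 hA hJ11 hJ21 hV1 hV2 horder hrange hne1 hne2
end

section
/- Theorem 4.1(ii2): Suppose B ≠ 1 and the critical voltages satisfy V_q^1 > 0 > V_q^2, where V_q^1 = −D/(z2·(1−B)) and V_q^2 = −D/(z1·(1−B)). If V > V_q^1, and moreover z1·V + D ≠ 0 and z2·V + D ≠ 0, then J10·J11 > 0 and J20·J21 > 0. -/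
set_option maxHeartbeats 1000000

private lemma sqpos' (x : ℝ) (hx : x ≠ 0) : 0 < x ^ 2 := by
  rcases hx.lt_or_gt with h | h <;> nlinarith

private lemma div_pos_of_mul_pos' {a b : ℝ} (h : 0 < a * b) : 0 < a / b := by
  rcases mul_pos_iff.mp h with ⟨h1, h2⟩ | ⟨h1, h2⟩
  · exact div_pos h1 h2
  · exact div_pos_of_neg_of_neg h1 h2

theorem stmt16 (z1 z2 V L R H1 α β : ℝ)
    (hz1 : 0 < z1) (hz2 : z2 < 0) (hL : 0 < L) (hR : 0 < R) (hLR : L ≠ R)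
    (hH1 : 0 < H1) (hα : 0 < α) (hαβ : α < β) (hβ : β < 1)
    (D Sa Sb A B J10 J20 J11 J21 Vq1 Vq2 : ℝ)
    (hD : D = Real.log L - Real.log R)
    (hSa : Sa = (1 - α) * L + α * R)
    (hSb : Sb = (1 - β) * L + β * R)
    (hJ10 : J10 = (L - R) * (z1 * V + D) / (z1 * H1 * D))
    (hJ20 : J20 = -((L - R) * (z2 * V + D)) / (z2 * H1 * D))
    (hA : A = -((β - α) * (L - R) ^ 2) / (Sa * Sb * D))
    (hB : B = Real.log (Sb / Sa) / A)
    (hJ11 : J11 = A * (z2 * (1 - B) * V + D) * (z1 * V + D) / ((z1 - z2) * H1 * D ^ 2))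
    (hJ21 : J21 = A * (z1 * (1 - B) * V + D) * (z2 * V + D) / ((z2 - z1) * H1 * D ^ 2))
    (hB1 : B ≠ 1)
    (hV1 : Vq1 = -D / (z2 * (1 - B)))
    (hV2 : Vq2 = -D / (z1 * (1 - B)))
    (horder : Vq2 < 0 ∧ 0 < Vq1)
    (hrange : Vq1 < V)
    (hne1 : z1 * V + D ≠ 0) (hne2 : z2 * V + D ≠ 0) :
    0 < J10 * J11 ∧ 0 < J20 * J21 := by
  have hLRD : 0 < (L - R) * D := by
    rcases hLR.lt_or_gt with h | h
    · have hlog : Real.log L < Real.log R := Real.log_lt_log hL h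
      have h1 : L - R < 0 := by linarith
      have h2 : D < 0 := by rw [hD]; linarith
      exact mul_pos_of_neg_of_neg h1 h2
    · have hlog : Real.log R < Real.log L := Real.log_lt_log hR h
      have h1 : 0 < L - R := by linarith
      have h2 : 0 < D := by rw [hD]; linarith
      exact mul_pos h1 h2
  have hD0 : D ≠ 0 := by
    intro h; rw [h, mul_zero] at hLRD; exact lt_irrefl 0 hLRD
  have hSa0 : 0 < Sa := by rw [hSa]; nlinarith [mul_pos (show (0:ℝ) < 1 - α by linarith) hL, mul_pos hα hR]
  have hSb0 : 0 < Sb := by rw [hSb]; nlinarith [mul_pos (show (0:ℝ) < 1 - β by linarith) hL, mul_pos (lt_trans hα hαβ) hR]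
  have hLR2 : 0 < (L - R) ^ 2 := sqpos' _ (sub_ne_zero.mpr hLR)
  have hADlt : A * D < 0 := by
    have heq : A * D = -((β - α) * (L - R) ^ 2 / (Sa * Sb)) := by
      rw [hA]; field_simp
    rw [heq]
    have : 0 < (β - α) * (L - R) ^ 2 / (Sa * Sb) :=
      div_pos (mul_pos (by linarith) hLR2) (mul_pos hSa0 hSb0)
    linarith
  -- sign of k = z2*(1-B)
  have hk' : 0 < -D / (z2 * (1 - B)) := hV1 ▸ horder.2
  have hDk : D * (z2 * (1 - B)) < 0 := by
    rcases div_pos_iff.mp hk' with ⟨h1, h2⟩ | ⟨h1, h2⟩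
    · exact mul_neg_of_neg_of_pos (by linarith) h2
    · exact mul_neg_of_pos_of_neg (by linarith) h2
  have hm' : -D / (z1 * (1 - B)) < 0 := hV2 ▸ horder.1
  have hDm : 0 < D * (z1 * (1 - B)) := by
    rcases div_neg_iff.mp hm' with ⟨h1, h2⟩ | ⟨h1, h2⟩
    · exact mul_pos_of_neg_of_neg (by linarith) h2
    · exact mul_pos (by linarith) h2
  have hrange1 : -D / (z2 * (1 - B)) < V := by rw [← hV1]; exact hrange
  have hrange2 : -D / (z1 * (1 - B)) < V := by
    rw [← hV2]; linarith [horder.1, horder.2]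
  have hkVD : D * (z2 * (1 - B) * V + D) < 0 := by
    rcases mul_neg_iff.mp hDk with ⟨h1, h2⟩ | ⟨h1, h2⟩
    · have h3 := (div_lt_iff_of_neg h2).mp hrange1
      have h4 : z2 * (1 - B) * V + D < 0 := by linarith
      exact mul_neg_of_pos_of_neg h1 h4
    · have h3 := (div_lt_iff₀ h2).mp hrange1
      have h4 : 0 < z2 * (1 - B) * V + D := by linarith
      exact mul_neg_of_neg_of_pos h1 h4
  have hmVD : 0 < D * (z1 * (1 - B) * V + D) := by
    rcases mul_pos_iff.mp hDm with ⟨h1, h2⟩ | ⟨h1, h2⟩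
    · have h3 := (div_lt_iff₀ h2).mp hrange2
      have h4 : 0 < z1 * (1 - B) * V + D := by linarith
      exact mul_pos h1 h4
    · have h3 := (div_lt_iff_of_neg h2).mp hrange2
      have h4 : z1 * (1 - B) * V + D < 0 := by linarith
      exact mul_pos_of_neg_of_neg h1 h4
  have hsq1 : 0 < (z1 * V + D) ^ 2 := sqpos' _ hne1
  have hsq2 : 0 < (z2 * V + D) ^ 2 := sqpos' _ hne2
  have hH1sq : 0 < H1 ^ 2 := by positivity
  constructor
  · rw [hJ10, hJ11, div_mul_div_comm]
    apply div_pos_of_mul_pos'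
    have hP : 0 < ((L - R) * D) * (-(A * D)) * (-(D * (z2 * (1 - B) * V + D))) *
        ((z1 * V + D) ^ 2) * (z1 * (z1 - z2) * H1 ^ 2) := by
      apply mul_pos
      apply mul_pos
      apply mul_pos
      apply mul_pos hLRD (by linarith)
      · linarith
      · exact hsq1
      · exact mul_pos (mul_pos hz1 (by linarith)) hH1sq
    linarith [hP, (by ring : ((L - R) * D) * (-(A * D)) * (-(D * (z2 * (1 - B) * V + D))) *
        ((z1 * V + D) ^ 2) * (z1 * (z1 - z2) * H1 ^ 2) =
      (L - R) * (z1 * V + D) * (A * (z2 * (1 - B) * V + D) * (z1 * V + D)) *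
        (z1 * H1 * D * ((z1 - z2) * H1 * D ^ 2)))]
  · rw [hJ20, hJ21, div_mul_div_comm]
    apply div_pos_of_mul_pos'
    have hP : 0 < ((L - R) * D) * (-(A * D)) * (D * (z1 * (1 - B) * V + D)) *
        ((z2 * V + D) ^ 2) * (z2 * (z2 - z1) * H1 ^ 2) := by
      apply mul_pos
      apply mul_pos
      apply mul_pos
      apply mul_pos hLRD (by linarith)
      · exact hmVD
      · exact hsq2
      · exact mul_pos (mul_pos_of_neg_of_neg hz2 (by linarith)) hH1sq
    linarith [hP, (by ring : ((L - R) * D) * (-(A * D)) * (D * (z1 * (1 - B) * V + D)) *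
        ((z2 * V + D) ^ 2) * (z2 * (z2 - z1) * H1 ^ 2) =
      -((L - R) * (z2 * V + D)) * (A * (z1 * (1 - B) * V + D) * (z2 * V + D)) *
        (z2 * H1 * D * ((z2 - z1) * H1 * D ^ 2)))]
end

section
/- Theorem 4.1(ii3): Suppose B ≠ 1 and the critical voltages satisfy V_q^1 > 0 > V_q^2, where V_q^1 = −D/(z2·(1−B)) and V_q^2 = −D/(z1·(1−B)). If V < V_q^2, and moreover z1·V + D ≠ 0 and z2·V + D ≠ 0, then J10·J11 < 0 and J20·J21 < 0. -/
set_option maxHeartbeats 1000000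


theorem stmt17 (z1 z2 V L R H1 α β : ℝ)
    (hz1 : 0 < z1) (hz2 : z2 < 0) (hL : 0 < L) (hR : 0 < R) (hLR : L ≠ R)
    (hH1 : 0 < H1) (hα : 0 < α) (hαβ : α < β) (hβ : β < 1)
    (D Sa Sb A B J10 J20 J11 J21 Vq1 Vq2 : ℝ)
    (hD : D = Real.log L - Real.log R)
    (hSa : Sa = (1 - α) * L + α * R)
    (hSb : Sb = (1 - β) * L + β * R)
    (hJ10 : J10 = (L - R) * (z1 * V + D) / (z1 * H1 * D))
    (hJ20 : J20 = -((L - R) * (z2 * V + D)) / (z2 * H1 * D))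
    (hA : A = -((β - α) * (L - R) ^ 2) / (Sa * Sb * D))
    (hB : B = Real.log (Sb / Sa) / A)
    (hJ11 : J11 = A * (z2 * (1 - B) * V + D) * (z1 * V + D) / ((z1 - z2) * H1 * D ^ 2))
    (hJ21 : J21 = A * (z1 * (1 - B) * V + D) * (z2 * V + D) / ((z2 - z1) * H1 * D ^ 2))
    (hB1 : B ≠ 1)
    (hV1 : Vq1 = -D / (z2 * (1 - B)))
    (hV2 : Vq2 = -D / (z1 * (1 - B)))
    (horder : Vq2 < 0 ∧ 0 < Vq1)
    (hrange : V < Vq2)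
    (hne1 : z1 * V + D ≠ 0) (hne2 : z2 * V + D ≠ 0) :
    J10 * J11 < 0 ∧ J20 * J21 < 0 := by
  set E := 1 - B with hE
  -- basic positivity
  have hSa' : 0 < Sa := by rw [hSa]; nlinarith
  have hSb' : 0 < Sb := by rw [hSb]; nlinarith
  -- (L-R)*D > 0
  have t1 : 0 < (L - R) * D := by
    rcases lt_or_gt_of_ne hLR with h | h
    · have : Real.log L < Real.log R := Real.log_lt_log hL h
      rw [hD]; nlinarith
    · have : Real.log R < Real.log L := Real.log_lt_log hR h
      rw [hD]; nlinarith
  have hD0 : D ≠ 0 := by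
    intro h; rw [h, mul_zero] at t1; exact lt_irrefl 0 t1
  have hLR0 : L - R ≠ 0 := sub_ne_zero.mpr hLR
  -- A*D < 0
  have t2 : A * D < 0 := by
    have hAD : A * D = -((β - α) * (L - R) ^ 2) / (Sa * Sb) := by
      rw [hA]; field_simp
    rw [hAD]
    apply div_neg_of_neg_of_pos
    · have : 0 < (β - α) * (L - R) ^ 2 := by
        apply mul_pos (by linarith)
        positivity
      linarith
    · exact mul_pos hSa' hSb'
  -- D*E > 0
  have hDE : 0 < D * E := by
    have h1 : 0 < D / (z1 * E) := by
      have := horder.1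
      rw [hV2, neg_div] at this
      linarith
    rcases div_pos_iff.mp h1 with ⟨ha, hb⟩ | ⟨ha, hb⟩
    · have hEpos : 0 < E := by nlinarith
      exact mul_pos ha hEpos
    · have hEneg : E < 0 := by nlinarith
      exact mul_pos_of_neg_of_neg ha hEneg
  have hE0 : E ≠ 0 := by
    intro h; rw [h, mul_zero] at hDE; exact lt_irrefl 0 hDE
  -- key sign facts
  have hrange' : V < -D / (z1 * E) := by rw [hV2] at hrange; exact hrange
  have key : 0 < D * (z2 * E * V + D) ∧ D * (z1 * E * V + D) < 0 := by
    rcases hD0.lt_or_gt with hDneg | hDpos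
    · -- D < 0, E < 0
      have hEneg : E < 0 := by nlinarith
      have hz1E : z1 * E < 0 := mul_neg_of_pos_of_neg hz1 hEneg
      have hVb : -D < V * (z1 * E) := (lt_div_iff_of_neg hz1E).mp hrange'
      have h4 : 0 < z1 * E * V + D := by nlinarith
      have hVneg : V < 0 :=
        lt_trans hrange' (div_neg_of_pos_of_neg (by linarith : (0:ℝ) < -D) hz1E)
      have h3 : z2 * E * V + D < 0 := by
        have : z2 * E * V < 0 := by nlinarith [mul_pos_of_neg_of_neg hz2 hEneg]
        linarith
      exact ⟨mul_pos_of_neg_of_neg hDneg h3, mul_neg_of_neg_of_pos hDneg h4⟩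
    · -- D > 0, E > 0
      have hEpos : 0 < E := by nlinarith
      have hz1E : 0 < z1 * E := mul_pos hz1 hEpos
      have hVb : V * (z1 * E) < -D := (lt_div_iff₀ hz1E).mp hrange'
      have h4 : z1 * E * V + D < 0 := by nlinarith
      have hVneg : V < 0 := by nlinarith
      have h3 : 0 < z2 * E * V + D := by
        have : 0 < z2 * E * V := by nlinarith [mul_neg_of_neg_of_pos hz2 hEpos]
        linarith
      exact ⟨mul_pos hDpos h3, mul_neg_of_pos_of_neg hDpos h4⟩
  obtain ⟨k1, k2⟩ := key
  have hz1' : z1 ≠ 0 := ne_of_gt hz1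
  have hz2' : z2 ≠ 0 := ne_of_lt hz2
  have hH1' : H1 ≠ 0 := ne_of_gt hH1
  have hz12 : z1 - z2 ≠ 0 := by intro h; nlinarith [sub_eq_zero.mp h]
  have hz21 : z2 - z1 ≠ 0 := by intro h; nlinarith [sub_eq_zero.mp h]
  have hD6 : 0 < D ^ 6 := by positivity
  have hsq1 : 0 < (z1 * V + D) ^ 2 := by positivity
  have hsq2 : 0 < (z2 * V + D) ^ 2 := by positivity
  constructor
  · have heq : J10 * J11 * (z1 * (z1 - z2) * H1 ^ 2 * D ^ 6) =
        ((L - R) * D) * (A * D) * (D * (z2 * E * V + D)) * (z1 * V + D) ^ 2 := by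
      rw [hJ10, hJ11, hE]
      field_simp
    have hM : 0 < z1 * (z1 - z2) * H1 ^ 2 * D ^ 6 := by
      have : 0 < z1 - z2 := by linarith
      positivity
    have hN : ((L - R) * D) * (A * D) * (D * (z2 * E * V + D)) * (z1 * V + D) ^ 2 < 0 := by
      apply mul_neg_of_neg_of_pos _ hsq1
      apply mul_neg_of_neg_of_pos _ k1
      exact mul_neg_of_pos_of_neg t1 t2
    have hx : J10 * J11 * (z1 * (z1 - z2) * H1 ^ 2 * D ^ 6) < 0 := heq ▸ hN
    exact lt_of_not_ge fun h => absurd hx (not_lt.mpr (mul_nonneg h hM.le))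
  · have heq : J20 * J21 * (z2 * (z2 - z1) * H1 ^ 2 * D ^ 6) =
        -(((L - R) * D) * (A * D) * (D * (z1 * E * V + D)) * (z2 * V + D) ^ 2) := by
      rw [hJ20, hJ21, hE]
      field_simp
    have hM : 0 < z2 * (z2 - z1) * H1 ^ 2 * D ^ 6 := by
      have h1 : 0 < z2 * (z2 - z1) := mul_pos_of_neg_of_neg hz2 (by linarith)
      positivity
    have hN : -(((L - R) * D) * (A * D) * (D * (z1 * E * V + D)) * (z2 * V + D) ^ 2) < 0 := by
      have : 0 < ((L - R) * D) * (A * D) * (D * (z1 * E * V + D)) * (z2 * V + D) ^ 2 := by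
        apply mul_pos _ hsq2
        apply mul_pos_of_neg_of_neg _ k2
        exact mul_neg_of_pos_of_neg t1 t2
      linarith
    have hx : J20 * J21 * (z2 * (z2 - z1) * H1 ^ 2 * D ^ 6) < 0 := heq ▸ hN
    exact lt_of_not_ge fun h => absurd hx (not_lt.mpr (mul_nonneg h hM.le))
end
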